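/- Let n ≥ 1 and N = {1,…,n}. Let β_j ∈ ℤ_{≥0} for j ∈ N, let a : ℤ_{≥0}ⁿ → ℂ with a(0,…,0) = 0, and let g : ∏_{j∈N} [0, β_j] ∖ {0} → ℂ be a smooth function, with g(0) defined arbitrarily. Then ∑_{m₁=0}^{β₁} ⋯ ∑_{m_n=0}^{β_n} g(m₁,…,m_n) a(m₁,…,m_n) = ∑_{A ⊆ N} (−1)^{|A|} ∫_{∏_{j∈A} [0, β_j]} g_{A,N∖A}(x) S_{A,N∖A}(x) dx, where for A = ∅ the integral is interpreted as the single value g_{∅,N} S_{∅,N}. -/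

import Mathlib

open MeasureTheory

noncomputable section

/-- One-variable partial derivative (within the interval `[c,d]`) of a function on `ℝⁿ`,
in the `j`-th coordinate. -/
def pderivI {n : ℕ} (c d : ℝ) (j : Fin n) (f : (Fin n → ℝ) → ℂ) : (Fin n → ℝ) → ℂ :=
  fun x => derivWithin (fun t => f (Function.update x j t)) (Set.Icc c d) (x j)

/-- Mixed partial derivative `∂^{|A|}/∂x_{i₁}⋯∂x_{i_{|A|}}` in the coordinates of `A`,
each taken within the corresponding interval `[α j, β j]`. -/
def mixedDeriv {n : ℕ} (α β : Fin n → ℝ) (A : Finset (Fin n))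
    (f : (Fin n → ℝ) → ℂ) : (Fin n → ℝ) → ℂ :=
  (A.sort (· ≤ ·)).foldr (fun j F => pderivI (α j) (β j) j F) f

/-- The embedding `I_{A,B}`: coordinates in `A` are free, coordinates in `B` are set to
`β`, the remaining coordinates are set to `α`. -/
def embedI {n : ℕ} (α β : Fin n → ℝ) (A B : Finset (Fin n)) (x : Fin n → ℝ) :
    Fin n → ℝ :=
  fun j => if j ∈ A then x j else if j ∈ B then β j else α j

/-- `S(X₁,…,X_n) = ∑_{0 ≤ m₁ ≤ X₁} ⋯ ∑_{0 ≤ m_n ≤ X_n} a(m₁,…,m_n)` (empty ranges give `0`). -/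
def partialSum {n : ℕ} (a : (Fin n → ℕ) → ℂ) (X : Fin n → ℝ) : ℂ :=
  ∑ m ∈ Fintype.piFinset (fun j => Finset.range (⌊X j⌋ + 1).toNat), a m

/-- Extension of a vector indexed by `A` to a vector indexed by `Fin n` (by `0`). -/
def extendA {n : ℕ} (A : Finset (Fin n)) (x : {j // j ∈ A} → ℝ) : Fin n → ℝ :=
  fun j => if h : j ∈ A then x ⟨j, h⟩ else 0

namespace AbelAux

open Set Function

variable {n : ℕ}

def patchF (T : Finset (Fin n)) (z : Fin n → ℝ) (x : {j // j ∈ T} → ℝ) : Fin n → ℝ :=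
  fun j => if h : j ∈ T then x ⟨j, h⟩ else z j

/-- The box `∏ [0, b k]`. -/
def bigBox (b : Fin n → ℝ) : Set (Fin n → ℝ) := Set.univ.pi fun k => Set.Icc (0 : ℝ) (b k)

lemma slice_mem_bigBox {b : Fin n → ℝ} {x : Fin n → ℝ} (hx : x ∈ bigBox b) {j : Fin n} {t : ℝ}
    (ht : t ∈ Set.Icc (0 : ℝ) (b j)) : Function.update x j t ∈ bigBox b := by
  intro k _
  rcases eq_or_ne k j with rfl | hk
  · simpa using ht
  · simp only [Function.update_of_ne hk]
    exact hx k trivial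

lemma eventually_update_not_mem {s : Set (Fin n → ℝ)} {A : Finset (Fin n)}
    (hs_upd : ∀ j ∈ A, ∀ (x : Fin n → ℝ) (t : ℝ), t ≠ 0 → Function.update x j t ∉ s)
    {x : Fin n → ℝ} (hx : x ∉ s) {j : Fin n} (hj : j ∈ A) :
    ∀ᶠ t in nhds (x j), Function.update x j t ∉ s := by
  rcases eq_or_ne (x j) 0 with h0 | h0
  · filter_upwards with t
    rcases eq_or_ne t 0 with rfl | ht
    · rw [← h0, Function.update_eq_self]; exact hx
    · exact hs_upd j hj x t ht
  · filter_upwards [isOpen_ne.mem_nhds h0] with t ht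
    exact hs_upd j hj x t ht

lemma keyHasDeriv {b : Fin n → ℝ} {A : Finset (Fin n)} {s : Set (Fin n → ℝ)}
    (hs_upd : ∀ j ∈ A, ∀ (x : Fin n → ℝ) (t : ℝ), t ≠ 0 → Function.update x j t ∉ s)
    {h : (Fin n → ℝ) → ℂ} (hh : DifferentiableOn ℝ h (bigBox b \ s))
    {j : Fin n} (hj : j ∈ A) {x : Fin n → ℝ} (hx : x ∈ bigBox b \ s) :
    HasDerivWithinAt (fun t => h (Function.update x j t))
      (fderivWithin ℝ h (bigBox b \ s) x (Pi.single j 1))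
      (Set.Icc 0 (b j)) (x j) := by
  have hdiff : HasFDerivWithinAt h (fderivWithin ℝ h (bigBox b \ s) x) (bigBox b \ s) x :=
    (hh x hx).hasFDerivWithinAt
  have hu : HasDerivWithinAt (fun t => Function.update x j t) (Pi.single j 1)
      (Set.Icc 0 (b j) ∩ {t | Function.update x j t ∉ s}) (x j) :=
    (hasDerivAt_update x j (x j)).hasDerivWithinAt
  have hmaps : MapsTo (fun t => Function.update x j t)
      (Set.Icc 0 (b j) ∩ {t | Function.update x j t ∉ s}) (bigBox b \ s) :=
    fun t ht => ⟨slice_mem_bigBox hx.1 ht.1, ht.2⟩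
  have hcomp := hdiff.comp_hasDerivWithinAt_of_eq (x j) hu hmaps
    (by rw [Function.update_eq_self])
  have hmem : Set.Icc (0:ℝ) (b j) ∩ {t | Function.update x j t ∉ s}
      ∈ nhdsWithin (x j) (Set.Icc 0 (b j)) :=
    Filter.inter_mem self_mem_nhdsWithin
      (mem_nhdsWithin_of_mem_nhds (eventually_update_not_mem hs_upd hx.2 hj))
  exact (hcomp.mono_of_mem_nhdsWithin hmem)

lemma pderivI_eq {b : Fin n → ℝ} {A : Finset (Fin n)} {s : Set (Fin n → ℝ)}
    (hb : ∀ j, 0 < b j)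
    (hs_upd : ∀ j ∈ A, ∀ (x : Fin n → ℝ) (t : ℝ), t ≠ 0 → Function.update x j t ∉ s)
    {h : (Fin n → ℝ) → ℂ} (hh : DifferentiableOn ℝ h (bigBox b \ s))
    {j : Fin n} (hj : j ∈ A) {x : Fin n → ℝ} (hx : x ∈ bigBox b \ s) :
    pderivI 0 (b j) j h x = fderivWithin ℝ h (bigBox b \ s) x (Pi.single j 1) :=
  (keyHasDeriv hs_upd hh hj hx).derivWithin
    ((uniqueDiffOn_Icc (hb j)) _ (hx.1 j trivial))

lemma uD {b : Fin n → ℝ} (hb : ∀ j, 0 < b j) {s : Set (Fin n → ℝ)} (hsc : IsClosed s) :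
    UniqueDiffOn ℝ (bigBox b \ s) := by
  have hΩ : UniqueDiffOn ℝ (bigBox b) := by
    apply uniqueDiffOn_convex (convex_pi fun i _ => convex_Icc _ _)
    rw [bigBox, interior_pi_set finite_univ]
    refine ⟨fun j => b j / 2, fun j _ => ?_⟩
    show b j / 2 ∈ interior (Icc 0 (b j))
    rw [interior_Icc]
    exact Set.mem_Ioo.mpr ⟨half_pos (hb j), half_lt_self (hb j)⟩
  intro x hx
  have hnhds : nhdsWithin x (bigBox b \ s) = nhdsWithin x (bigBox b) := by
    rw [diff_eq, ← nhdsWithin_restrict' (bigBox b) (hsc.isOpen_compl.mem_nhds hx.2)]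
  exact (uniqueDiffWithinAt_congr hnhds).mpr (hΩ x hx.1)

lemma contDiffOn_pderivI {b : Fin n → ℝ} {A : Finset (Fin n)} {s : Set (Fin n → ℝ)}
    (hb : ∀ j, 0 < b j) (hsc : IsClosed s)
    (hs_upd : ∀ j ∈ A, ∀ (x : Fin n → ℝ) (t : ℝ), t ≠ 0 → Function.update x j t ∉ s)
    {h : (Fin n → ℝ) → ℂ} (hh : ContDiffOn ℝ (⊤ : ℕ∞) h (bigBox b \ s))
    {j : Fin n} (hj : j ∈ A) :
    ContDiffOn ℝ (⊤ : ℕ∞) (pderivI 0 (b j) j h) (bigBox b \ s) := by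
  have hUD := uD hb hsc
  have h1 : ContDiffOn ℝ (⊤ : ℕ∞) (fderivWithin ℝ h (bigBox b \ s)) (bigBox b \ s) :=
    hh.fderivWithin hUD (by simp)
  have h2 : ContDiffOn ℝ (⊤ : ℕ∞) (fun x => fderivWithin ℝ h (bigBox b \ s) x (Pi.single j 1))
      (bigBox b \ s) := h1.clm_apply contDiffOn_const
  exact h2.congr fun x hx => pderivI_eq hb hs_upd (hh.differentiableOn (by simp)) hj hx

lemma contDiffOn_fold {b : Fin n → ℝ} {A : Finset (Fin n)} {s : Set (Fin n → ℝ)}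
    (hb : ∀ j, 0 < b j) (hsc : IsClosed s)
    (hs_upd : ∀ j ∈ A, ∀ (x : Fin n → ℝ) (t : ℝ), t ≠ 0 → Function.update x j t ∉ s)
    {h : (Fin n → ℝ) → ℂ} (hh : ContDiffOn ℝ (⊤ : ℕ∞) h (bigBox b \ s)) :
    ∀ (L : List (Fin n)), (∀ j ∈ L, j ∈ A) →
      ContDiffOn ℝ (⊤ : ℕ∞) (L.foldr (fun j F => pderivI 0 (b j) j F) h) (bigBox b \ s) := by
  intro L
  induction L with
  | nil => intro _; exact hh
  | cons j L ih =>
      intro hL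
      exact contDiffOn_pderivI hb hsc hs_upd (ih fun k hk => hL k (List.mem_cons_of_mem _ hk))
        (hL j (List.mem_cons_self))

lemma contDiffOn_mixedDeriv {b : Fin n → ℝ} {A : Finset (Fin n)} {s : Set (Fin n → ℝ)}
    (hb : ∀ j, 0 < b j) (hsc : IsClosed s)
    (hs_upd : ∀ j ∈ A, ∀ (x : Fin n → ℝ) (t : ℝ), t ≠ 0 → Function.update x j t ∉ s)
    {h : (Fin n → ℝ) → ℂ} (hh : ContDiffOn ℝ (⊤ : ℕ∞) h (bigBox b \ s))
    {T : Finset (Fin n)} (hT : T ⊆ A) :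
    ContDiffOn ℝ (⊤ : ℕ∞) (mixedDeriv (fun _ => (0:ℝ)) b T h) (bigBox b \ s) :=
  contDiffOn_fold hb hsc hs_upd hh (T.sort (· ≤ ·))
    (fun j hj => hT (Finset.mem_sort (· ≤ ·) |>.mp hj))

lemma continuous_slice (x : Fin n → ℝ) (j : Fin n) :
    Continuous (fun t : ℝ => Function.update x j t) := by fun_prop

lemma ftc_slice {b c : Fin n → ℝ} {A : Finset (Fin n)} {s : Set (Fin n → ℝ)}
    (hb : ∀ j, 0 < b j) (hc : ∀ k, 0 ≤ c k) (hcb : ∀ k, c k ≤ b k) (hsc : IsClosed s)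
    (hs_upd : ∀ j ∈ A, ∀ (x : Fin n → ℝ) (t : ℝ), t ≠ 0 → Function.update x j t ∉ s)
    (hs_box : ∀ y : Fin n → ℝ, (∀ k, y k ∈ Set.Icc (c k) (b k)) → y ∉ s)
    {M : (Fin n → ℝ) → ℂ} (hM : ContDiffOn ℝ (⊤ : ℕ∞) M (bigBox b \ s)) {j : Fin n} (hj : j ∈ A)
    {x : Fin n → ℝ} (hx : ∀ k, x k ∈ Set.Icc (c k) (b k)) :
    ∫ t in (c j)..(b j), pderivI 0 (b j) j M (Function.update x j t)
      = M (Function.update x j (b j)) - M (Function.update x j (c j)) := by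
  have hboxmem : ∀ t ∈ Set.Icc (c j) (b j), (∀ k, Function.update x j t k ∈ Set.Icc (c k) (b k)) := by
    intro t ht k
    rcases eq_or_ne k j with rfl | hk
    · simpa using ht
    · simp only [Function.update_of_ne hk]; exact hx k
  have hxmem : ∀ t ∈ Set.Icc (c j) (b j), Function.update x j t ∈ bigBox b \ s := by
    intro t ht
    refine ⟨fun k _ => ?_, hs_box _ (hboxmem t ht)⟩
    exact ⟨(hc k).trans (hboxmem t ht k).1, (hboxmem t ht k).2⟩
  have hcont : ContinuousOn (fun t => M (Function.update x j t)) (Set.Icc (c j) (b j)) :=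
    hM.continuousOn.comp (continuous_slice x j).continuousOn (fun t ht => hxmem t ht)
  have hderiv : ∀ t ∈ Set.Ioo (c j) (b j),
      HasDerivWithinAt (fun t => M (Function.update x j t))
        (pderivI 0 (b j) j M (Function.update x j t)) (Set.Ioi t) t := by
    intro t ht
    have hmem := hxmem t ⟨ht.1.le, ht.2.le⟩
    have h1 := keyHasDeriv hs_upd (hM.differentiableOn (by simp)) hj hmem
    rw [← pderivI_eq hb hs_upd (hM.differentiableOn (by simp)) hj hmem] at h1
    have h2 : HasDerivWithinAt (fun t' => M (Function.update x j t'))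
        (pderivI 0 (b j) j M (Function.update x j t)) (Set.Icc 0 (b j)) t := by
      have e1 : (fun t' => M (Function.update (Function.update x j t) j t'))
          = fun t' => M (Function.update x j t') := by
        funext t'; rw [Function.update_idem]
      have e2 : Function.update x j t j = t := Function.update_self j t x
      rw [e1, e2] at h1
      exact h1
    refine h2.mono_of_mem_nhdsWithin (Filter.mem_of_superset
      (Ioc_mem_nhdsGT_of_mem ⟨le_refl t, ht.2⟩) ?_)
    intro r hr
    exact ⟨le_of_lt (lt_of_le_of_lt (hc j) (lt_of_lt_of_le ht.1 hr.1.le)), hr.2⟩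
  have hint : IntervalIntegrable (fun t => pderivI 0 (b j) j M (Function.update x j t))
      volume (c j) (b j) := by
    apply ContinuousOn.intervalIntegrable
    rw [Set.uIcc_of_le (hcb j)]
    exact (contDiffOn_pderivI hb hsc hs_upd hM hj).continuousOn.comp
      (continuous_slice x j).continuousOn (fun t ht => hxmem t ht)
  exact intervalIntegral.integral_eq_sub_of_hasDeriv_right_of_le (hcb j) hcont hderiv hint


set_option maxHeartbeats 1600000 in
theorem split_integral (T : Finset (Fin n)) {j : Fin n} (hj : j ∈ T)
    (G : (Fin n → ℝ) → ℂ) (z : Fin n → ℝ) (u v : Fin n → ℝ)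
    (hInt : IntegrableOn (fun x : {i // i ∈ T} → ℝ => G (patchF T z x))
      (Set.univ.pi fun i : {i // i ∈ T} => Set.Icc (u i.1) (v i.1))) :
    ∫ x : {i // i ∈ T} → ℝ in Set.univ.pi fun i : {i // i ∈ T} => Set.Icc (u i.1) (v i.1),
        G (patchF T z x)
      = ∫ y : {i // i ∈ T.erase j} → ℝ in
          Set.univ.pi fun i : {i // i ∈ T.erase j} => Set.Icc (u i.1) (v i.1),
          ∫ t in Set.Icc (u j) (v j), G (Function.update (patchF (T.erase j) z y) j t) := by
  classical
  let p : {i // i ∈ T} → Prop := fun i => (i : Fin n) ∈ T.erase j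
  haveI hpd : DecidablePred p := fun i => decidable_of_iff ((i : Fin n) ∈ T.erase j) Iff.rfl
  let eqv1 : {i // i ∈ T.erase j} ≃ {q : {i // i ∈ T} // p q} :=
    { toFun := fun i => ⟨⟨i.1, Finset.mem_of_mem_erase i.2⟩, i.2⟩
      invFun := fun q => ⟨q.1.1, q.2⟩
      left_inv := fun i => rfl
      right_inv := fun q => rfl }
  haveI huniq : Unique {q : {i // i ∈ T} // ¬ p q} :=
    { default := ⟨⟨j, hj⟩, by simp [p]⟩
      uniq := fun q => by
        have hq : (q.1 : Fin n) = j := by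
          by_contra hne
          exact q.2 (Finset.mem_erase.mpr ⟨hne, q.1.2⟩)
        apply Subtype.ext; apply Subtype.ext; exact hq }
  let E : (({i // i ∈ T.erase j} → ℝ) × ℝ) ≃ᵐ ({i // i ∈ T} → ℝ) :=
    (MeasurableEquiv.prodCongr (MeasurableEquiv.piCongrLeft (fun _ : {q : {i // i ∈ T} // p q} => ℝ) eqv1)
      (MeasurableEquiv.funUnique {q : {i // i ∈ T} // ¬ p q} ℝ).symm).trans
      (MeasurableEquiv.piEquivPiSubtypeProd (fun _ : {i // i ∈ T} => ℝ) p).symm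
  have MPE : MeasurePreserving E volume volume := by
    have MP1 : MeasurePreserving
        (MeasurableEquiv.piCongrLeft (fun _ : {q : {i // i ∈ T} // p q} => ℝ) eqv1)
        volume volume := volume_measurePreserving_piCongrLeft _ eqv1
    have MP2 : MeasurePreserving
        (MeasurableEquiv.funUnique {q : {i // i ∈ T} // ¬ p q} ℝ).symm volume volume := by
      have h := (measurePreserving_funUnique (volume : Measure ℝ) {q : {i // i ∈ T} // ¬ p q}).symm
        (MeasurableEquiv.funUnique {q : {i // i ∈ T} // ¬ p q} ℝ)
      convert h using 2
      rfl
      rfl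
      rw [volume_pi]
      congr 1
      exact Subsingleton.elim _ _
    have MP3 : MeasurePreserving
        (MeasurableEquiv.piEquivPiSubtypeProd (fun _ : {i // i ∈ T} => ℝ) p).symm
        (((volume : Measure ({q : {i // i ∈ T} // p q} → ℝ))).prod
          (volume : Measure ({q : {i // i ∈ T} // ¬ p q} → ℝ))) volume :=
      (volume_preserving_piEquivPiSubtypeProd (fun _ : {i // i ∈ T} => ℝ) p).symm _
    have MPp := (MP1.prod MP2)
    have hE : ⇑E = ⇑(MeasurableEquiv.piEquivPiSubtypeProd (fun _ : {i // i ∈ T} => ℝ) p).symm ∘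
        (Prod.map (MeasurableEquiv.piCongrLeft (fun _ : {q : {i // i ∈ T} // p q} => ℝ) eqv1)
          (MeasurableEquiv.funUnique {q : {i // i ∈ T} // ¬ p q} ℝ).symm) := rfl
    have hvol : (volume : Measure ((({i // i ∈ T.erase j} → ℝ) × ℝ))) = volume.prod volume := rfl
    rw [show MeasurePreserving ⇑E volume volume =
      MeasurePreserving ⇑E (volume.prod volume) volume from rfl]
    exact hE ▸ (MP3.comp MPp)
  have hEk : ∀ (y : {i // i ∈ T.erase j} → ℝ) (t : ℝ) (k : {i // i ∈ T}),
      E (y, t) k = if h : p k then y ⟨k.1, h⟩ else t := by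
    intro y t k
    have h1 : E (y, t) k =
        (Equiv.piEquivPiSubtypeProd p (fun _ : {i // i ∈ T} => ℝ)).symm
          ((Equiv.piCongrLeft (fun _ : {q : {i // i ∈ T} // p q} => ℝ) eqv1) y, fun _ => t) k := rfl
    rw [h1, Equiv.piEquivPiSubtypeProd_symm_apply]
    by_cases h : p k
    · simp only [dif_pos h]
      exact Equiv.piCongrLeft_apply_apply (fun _ : {q : {i // i ∈ T} // p q} => ℝ) eqv1 y ⟨k.1, h⟩
    · simp only [dif_neg h]
  have hEform : ∀ (y : {i // i ∈ T.erase j} → ℝ) (t : ℝ),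
      patchF T z (E (y, t)) = Function.update (patchF (T.erase j) z y) j t := by
    intro y t
    funext k
    by_cases hk : k ∈ T
    · have := hEk y t ⟨k, hk⟩
      simp only [patchF, dif_pos hk]
      rw [this]
      by_cases hk' : k ∈ T.erase j
      · have hkj : k ≠ j := (Finset.mem_erase.mp hk').1
        rw [dif_pos hk', Function.update_of_ne hkj]
        simp only [patchF, dif_pos hk']
      · have hkj : k = j := by
          rcases Finset.mem_insert.mp (by rw [Finset.insert_erase hj]; exact hk) with h | h
          · exact h
          · exact absurd h hk'
        subst hkj
        rw [dif_neg hk', Function.update_self]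
    · have hkj : k ≠ j := fun h => hk (h ▸ hj)
      have hk' : k ∉ T.erase j := fun h => hk (Finset.mem_of_mem_erase h)
      simp only [patchF, dif_neg hk, Function.update_of_ne hkj, dif_neg hk']
  have hpre : E ⁻¹' (Set.univ.pi fun i : {i // i ∈ T} => Set.Icc (u i.1) (v i.1))
      = (Set.univ.pi fun i : {i // i ∈ T.erase j} => Set.Icc (u i.1) (v i.1)) ×ˢ Set.Icc (u j) (v j) := by
    ext ⟨y, t⟩
    simp only [Set.mem_preimage, Set.mem_pi, Set.mem_univ, forall_true_left, Set.mem_prod]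
    constructor
    · intro H
      refine ⟨fun i => ?_, ?_⟩
      · have := H ⟨i.1, Finset.mem_of_mem_erase i.2⟩
        rwa [hEk y t ⟨i.1, Finset.mem_of_mem_erase i.2⟩, dif_pos i.2] at this
      · have := H ⟨j, hj⟩
        rwa [hEk y t ⟨j, hj⟩, dif_neg (by simp [p])] at this
    · rintro ⟨H1, H2⟩ i
      rw [hEk y t i]
      by_cases h : p i
      · rw [dif_pos h]; exact H1 ⟨i.1, h⟩
      · rw [dif_neg h]
        have : (i : Fin n) = j := by
          by_contra hne
          exact h (Finset.mem_erase.mpr ⟨hne, i.2⟩)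
        rw [this]; exact H2
  rw [← MPE.setIntegral_preimage_emb E.measurableEmbedding (fun x => G (patchF T z x))
    (Set.univ.pi fun i : {i // i ∈ T} => Set.Icc (u i.1) (v i.1))]
  have hInt' : IntegrableOn (fun w : ({i // i ∈ T.erase j} → ℝ) × ℝ => G (patchF T z (E w)))
      ((Set.univ.pi fun i : {i // i ∈ T.erase j} => Set.Icc (u i.1) (v i.1)) ×ˢ Set.Icc (u j) (v j)) := by
    rw [← hpre]
    exact (MPE.integrableOn_comp_preimage E.measurableEmbedding).mpr hInt
  rw [hpre]
  have hfin : ∫ w in (Set.univ.pi fun i : {i // i ∈ T.erase j} => Set.Icc (u i.1) (v i.1)) ×ˢ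
      Set.Icc (u j) (v j), G (patchF T z (E w))
      = ∫ y in (Set.univ.pi fun i : {i // i ∈ T.erase j} => Set.Icc (u i.1) (v i.1)),
          ∫ t in Set.Icc (u j) (v j), G (patchF T z (E (y, t))) :=
    setIntegral_prod _ hInt'
  rw [hfin]
  congr 1
  funext y
  congr 1
  funext t
  rw [hEform]

lemma sort_min_cons (T : Finset (Fin n)) (hT : T.Nonempty) :
    T.sort (· ≤ ·) = T.min' hT :: (T.erase (T.min' hT)).sort (· ≤ ·) := by
  have h1 : ∀ b ∈ T.erase (T.min' hT), T.min' hT ≤ b :=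
    fun b hb => T.min'_le b (Finset.mem_of_mem_erase hb)
  have := Finset.sort_insert (r := (· ≤ ·)) h1 (Finset.notMem_erase _ _)
  rw [Finset.insert_erase (T.min'_mem hT)] at this
  exact this

lemma continuous_patchF (T : Finset (Fin n)) (z : Fin n → ℝ) :
    Continuous (fun x : {j // j ∈ T} → ℝ => patchF T z x) := by
  apply continuous_pi; intro k
  by_cases h : k ∈ T
  · simp only [patchF, dif_pos h]; exact continuous_apply _
  · simp only [patchF, dif_neg h]; exact continuous_const

lemma patchF_update {T : Finset (Fin n)} {j : Fin n} (hj : j ∉ T) (z : Fin n → ℝ) (v : ℝ)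
    (y : {i // i ∈ T} → ℝ) :
    Function.update (patchF T z y) j v = patchF T (Function.update z j v) y := by
  funext k
  rcases eq_or_ne k j with rfl | hk
  · rw [Function.update_self]
    simp only [patchF, dif_neg hj, Function.update_self]
  · rw [Function.update_of_ne hk]
    simp only [patchF]
    by_cases h : k ∈ T
    · simp [h]
    · simp [h, Function.update_of_ne hk]

lemma patchF_mem_box {b c : Fin n → ℝ} {T : Finset (Fin n)} {z : Fin n → ℝ}
    {x : {i // i ∈ T} → ℝ} (hz : ∀ k, z k ∈ Set.Icc (c k) (b k))
    (hx : x ∈ Set.univ.pi fun i : {i // i ∈ T} => Set.Icc (c i.1) (b i.1)) :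
    ∀ k, patchF T z x k ∈ Set.Icc (c k) (b k) := by
  intro k
  by_cases h : k ∈ T
  · simp only [patchF, dif_pos h]; exact hx ⟨k, h⟩ trivial
  · simp only [patchF, dif_neg h]; exact hz k

theorem ML {b c : Fin n → ℝ} {A : Finset (Fin n)} {s : Set (Fin n → ℝ)}
    (hb : ∀ j, 0 < b j) (hc : ∀ k, 0 ≤ c k) (hcb : ∀ k, c k ≤ b k) (hsc : IsClosed s)
    (hs_upd : ∀ j ∈ A, ∀ (x : Fin n → ℝ) (t : ℝ), t ≠ 0 → Function.update x j t ∉ s)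
    (hs_box : ∀ y : Fin n → ℝ, (∀ k, y k ∈ Set.Icc (c k) (b k)) → y ∉ s)
    {h : (Fin n → ℝ) → ℂ} (hh : ContDiffOn ℝ (⊤ : ℕ∞) h (bigBox b \ s)) :
    ∀ T : Finset (Fin n), T ⊆ A → ∀ z : Fin n → ℝ, (∀ k, z k ∈ Set.Icc (c k) (b k)) →
    (∫ x : {i // i ∈ T} → ℝ in Set.univ.pi fun i : {i // i ∈ T} => Set.Icc (c i.1) (b i.1),
        mixedDeriv (fun _ => (0:ℝ)) b T h (patchF T z x))
      = ∑ C ∈ T.powerset, (-1 : ℂ) ^ C.card *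
          h (fun k => if k ∈ C then c k else if k ∈ T then b k else z k) := by
  intro T
  induction T using Finset.strongInduction with
  | _ T ih =>
    intro hTA z hz
    rcases T.eq_empty_or_nonempty with rfl | hT
    · haveI : IsEmpty {i : Fin n // i ∈ (∅ : Finset (Fin n))} :=
        ⟨fun i => Finset.notMem_empty _ i.2⟩
      have h1 : mixedDeriv (fun _ => (0:ℝ)) b ∅ h = h := by
        unfold mixedDeriv; rw [Finset.sort_empty]; rfl
      have h2 : ∀ x : {i : Fin n // i ∈ (∅ : Finset (Fin n))} → ℝ, patchF ∅ z x = z :=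
        fun x => funext fun k => dif_neg (Finset.notMem_empty k)
      have h3 : (Set.univ.pi fun i : {i : Fin n // i ∈ (∅ : Finset (Fin n))} =>
          Set.Icc (c i.1) (b i.1)) = Set.univ := by
        ext x; simp [Set.mem_pi]
      rw [h1]
      simp only [h2]
      rw [h3, Measure.restrict_univ, integral_const]
      rw [show (volume.real (Set.univ : Set ({i : Fin n // i ∈ (∅ : Finset (Fin n))} → ℝ))) = 1 by
        simp [Measure.real, volume_pi, Measure.pi_empty_univ]]
      rw [Finset.powerset_empty, Finset.sum_singleton]
      simp only [Finset.card_empty, pow_zero, one_mul, Finset.notMem_empty, if_false,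
        ENNReal.toReal_one, one_smul]
    · obtain ⟨j, hjT, hsort⟩ : ∃ j ∈ T, T.sort (· ≤ ·) = j :: (T.erase j).sort (· ≤ ·) :=
        ⟨T.min' hT, T.min'_mem hT, sort_min_cons T hT⟩
      have hjA : j ∈ A := hTA hjT
      have hT'A : T.erase j ⊆ A := fun k hk => hTA (Finset.mem_of_mem_erase hk)
      have hT'T : T.erase j ⊂ T := Finset.erase_ssubset hjT
      have hjT' : j ∉ T.erase j := Finset.notMem_erase j T
      have hMsc : ContDiffOn ℝ (⊤ : ℕ∞) (mixedDeriv (fun _ => (0:ℝ)) b (T.erase j) h) (bigBox b \ s) :=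
        contDiffOn_mixedDeriv hb hsc hs_upd hh hT'A
      have hGsc : ContDiffOn ℝ (⊤ : ℕ∞) (pderivI 0 (b j) j (mixedDeriv (fun _ => (0:ℝ)) b (T.erase j) h))
          (bigBox b \ s) := contDiffOn_pderivI hb hsc hs_upd hMsc hjA
      have mixEq : mixedDeriv (fun _ => (0:ℝ)) b T h
          = pderivI 0 (b j) j (mixedDeriv (fun _ => (0:ℝ)) b (T.erase j) h) := by
        unfold mixedDeriv
        rw [hsort]
        rfl
      have hmaps : ∀ (z' : Fin n → ℝ), (∀ k, z' k ∈ Set.Icc (c k) (b k)) →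
          ∀ (U : Finset (Fin n)) (x : {i // i ∈ U} → ℝ),
          x ∈ (Set.univ.pi fun i : {i // i ∈ U} => Set.Icc (c i.1) (b i.1)) →
          patchF U z' x ∈ bigBox b \ s := by
        intro z' hz' U x hx
        have hbox : ∀ k, patchF U z' x k ∈ Set.Icc (c k) (b k) := patchF_mem_box hz' hx
        exact ⟨fun k _ => ⟨(hc k).trans (hbox k).1, (hbox k).2⟩, hs_box _ hbox⟩
      have hIntCont : ContinuousOn
          (fun x : {i // i ∈ T} → ℝ =>
            pderivI 0 (b j) j (mixedDeriv (fun _ => (0:ℝ)) b (T.erase j) h) (patchF T z x))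
          (Set.univ.pi fun i : {i // i ∈ T} => Set.Icc (c i.1) (b i.1)) :=
        hGsc.continuousOn.comp (continuous_patchF T z).continuousOn
          (fun x hx => hmaps z hz T x hx)
      have hInt : IntegrableOn
          (fun x : {i // i ∈ T} → ℝ =>
            pderivI 0 (b j) j (mixedDeriv (fun _ => (0:ℝ)) b (T.erase j) h) (patchF T z x))
          (Set.univ.pi fun i : {i // i ∈ T} => Set.Icc (c i.1) (b i.1)) :=
        ContinuousOn.integrableOn_compact (isCompact_univ_pi fun i => isCompact_Icc) hIntCont
      rw [mixEq, split_integral T hjT _ z c b hInt]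
      have hzupd : ∀ v ∈ Set.Icc (c j) (b j), (∀ k, Function.update z j v k ∈ Set.Icc (c k) (b k)) := by
        intro v hv k
        rcases eq_or_ne k j with rfl | hk
        · simpa using hv
        · rw [Function.update_of_ne hk]; exact hz k
      have hinner : Set.EqOn
          (fun y : {i // i ∈ T.erase j} → ℝ =>
            ∫ t in Set.Icc (c j) (b j),
              pderivI 0 (b j) j (mixedDeriv (fun _ => (0:ℝ)) b (T.erase j) h)
                (Function.update (patchF (T.erase j) z y) j t))
          (fun y =>
            mixedDeriv (fun _ => (0:ℝ)) b (T.erase j) h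
              (patchF (T.erase j) (Function.update z j (b j)) y)
            - mixedDeriv (fun _ => (0:ℝ)) b (T.erase j) h
              (patchF (T.erase j) (Function.update z j (c j)) y))
          (Set.univ.pi fun i : {i // i ∈ T.erase j} => Set.Icc (c i.1) (b i.1)) := by
        intro y hy
        simp only
        rw [integral_Icc_eq_integral_Ioc, ← intervalIntegral.integral_of_le (hcb j)]
        rw [ftc_slice hb hc hcb hsc hs_upd hs_box hMsc hjA (patchF_mem_box hz hy)]
        rw [patchF_update hjT' z (b j) y, patchF_update hjT' z (c j) y]
      rw [setIntegral_congr_fun (MeasurableSet.univ_pi fun i => measurableSet_Icc) hinner]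
      have hIntb : IntegrableOn
          (fun y : {i // i ∈ T.erase j} → ℝ =>
            mixedDeriv (fun _ => (0:ℝ)) b (T.erase j) h
              (patchF (T.erase j) (Function.update z j (b j)) y))
          (Set.univ.pi fun i : {i // i ∈ T.erase j} => Set.Icc (c i.1) (b i.1)) :=
        ContinuousOn.integrableOn_compact (isCompact_univ_pi fun i => isCompact_Icc)
          (hMsc.continuousOn.comp (continuous_patchF _ _).continuousOn
            (fun x hx => hmaps _ (hzupd (b j) ⟨hcb j, le_refl _⟩) _ x hx))
      have hIntc : IntegrableOn
          (fun y : {i // i ∈ T.erase j} → ℝ =>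
            mixedDeriv (fun _ => (0:ℝ)) b (T.erase j) h
              (patchF (T.erase j) (Function.update z j (c j)) y))
          (Set.univ.pi fun i : {i // i ∈ T.erase j} => Set.Icc (c i.1) (b i.1)) :=
        ContinuousOn.integrableOn_compact (isCompact_univ_pi fun i => isCompact_Icc)
          (hMsc.continuousOn.comp (continuous_patchF _ _).continuousOn
            (fun x hx => hmaps _ (hzupd (c j) ⟨le_refl _, hcb j⟩) _ x hx))
      rw [integral_sub hIntb hIntc]
      rw [ih (T.erase j) hT'T hT'A _ (hzupd (b j) ⟨hcb j, le_refl _⟩),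
        ih (T.erase j) hT'T hT'A _ (hzupd (c j) ⟨le_refl _, hcb j⟩)]
      have e0 : T.powerset = (insert j (T.erase j)).powerset := by
        rw [Finset.insert_erase hjT]
      rw [e0, Finset.sum_powerset_insert hjT']
      have eb : ∀ C ∈ (T.erase j).powerset,
          (-1 : ℂ) ^ C.card * h (fun k => if k ∈ C then c k else if k ∈ T then b k else z k)
          = (-1 : ℂ) ^ C.card * h (fun k => if k ∈ C then c k else if k ∈ T.erase j then b k
              else Function.update z j (b j) k) := by
        intro C hC
        have hCT' : C ⊆ T.erase j := Finset.mem_powerset.mp hC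
        have harg : (fun k => if k ∈ C then c k else if k ∈ T then b k else z k)
            = (fun k => if k ∈ C then c k else if k ∈ T.erase j then b k
                else Function.update z j (b j) k) := by
          funext k
          by_cases hkC : k ∈ C
          · simp [hkC]
          · simp only [if_neg hkC]
            rcases eq_or_ne k j with rfl | hkj
            · rw [if_pos hjT, if_neg hjT', Function.update_self]
            · rw [Function.update_of_ne hkj]
              by_cases hkT : k ∈ T
              · rw [if_pos hkT, if_pos (Finset.mem_erase.mpr ⟨hkj, hkT⟩)]
              · rw [if_neg hkT, if_neg (fun hh' => hkT (Finset.mem_of_mem_erase hh'))]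
        rw [harg]
      have ec : ∀ C ∈ (T.erase j).powerset,
          (-1 : ℂ) ^ (insert j C).card *
            h (fun k => if k ∈ insert j C then c k else if k ∈ T then b k else z k)
          = -((-1 : ℂ) ^ C.card * h (fun k => if k ∈ C then c k else if k ∈ T.erase j then b k
              else Function.update z j (c j) k)) := by
        intro C hC
        have hCT' : C ⊆ T.erase j := Finset.mem_powerset.mp hC
        have hjC : j ∉ C := fun hjC => hjT' (hCT' hjC)
        have harg : (fun k => if k ∈ insert j C then c k else if k ∈ T then b k else z k)
            = (fun k => if k ∈ C then c k else if k ∈ T.erase j then b k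
                else Function.update z j (c j) k) := by
          funext k
          rcases eq_or_ne k j with rfl | hkj
          · rw [if_pos (Finset.mem_insert_self k C), if_neg hjC, if_neg hjT', Function.update_self]
          · rw [Function.update_of_ne hkj]
            by_cases hkC : k ∈ C
            · rw [if_pos (Finset.mem_insert_of_mem hkC), if_pos hkC]
            · rw [if_neg (fun hh' => hkC ((Finset.mem_insert.mp hh').resolve_left hkj)), if_neg hkC]
              by_cases hkT : k ∈ T
              · rw [if_pos hkT, if_pos (Finset.mem_erase.mpr ⟨hkj, hkT⟩)]
              · rw [if_neg hkT, if_neg (fun hh' => hkT (Finset.mem_of_mem_erase hh'))]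
        rw [harg, Finset.card_insert_of_notMem hjC, pow_succ]
        ring
      rw [Finset.sum_congr rfl eb, Finset.sum_congr rfl ec, Finset.sum_neg_distrib]
      ring

lemma neg_one_sum_C {α : Type*} [DecidableEq α] (u : Finset α) :
    ∑ B ∈ u.powerset, (-1 : ℂ) ^ B.card = if u = ∅ then 1 else 0 := by
  have h := Finset.sum_powerset_neg_one_pow_card (x := u)
  have h2 : ((∑ B ∈ u.powerset, (-1 : ℤ) ^ B.card : ℤ) : ℂ)
      = ∑ B ∈ u.powerset, (-1 : ℂ) ^ B.card := by push_cast; rfl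
  rw [← h2, h]
  split <;> simp

lemma incl_excl {α : Type*} [DecidableEq α] (u : Finset α) (F : Finset α → ℂ) :
    ∑ A ∈ u.powerset, (-1 : ℂ) ^ A.card * ∑ C ∈ A.powerset, (-1 : ℂ) ^ C.card * F C = F u := by
  have step1 : ∑ A ∈ u.powerset, (-1 : ℂ) ^ A.card * ∑ C ∈ A.powerset, (-1 : ℂ) ^ C.card * F C
      = ∑ A ∈ u.powerset, ∑ C ∈ u.powerset,
          (if C ⊆ A then (-1 : ℂ) ^ A.card * ((-1 : ℂ) ^ C.card * F C) else 0) := by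
    refine Finset.sum_congr rfl fun A hA => ?_
    rw [Finset.mul_sum]
    have hps : A.powerset = u.powerset.filter (· ⊆ A) := by
      ext C
      simp only [Finset.mem_powerset, Finset.mem_filter]
      exact ⟨fun h' => ⟨h'.trans (Finset.mem_powerset.mp hA), h'⟩, fun h' => h'.2⟩
    rw [hps, Finset.sum_filter]
  rw [step1, Finset.sum_comm]
  have step2 : ∀ C ∈ u.powerset,
      (∑ A ∈ u.powerset, if C ⊆ A then (-1 : ℂ) ^ A.card * ((-1 : ℂ) ^ C.card * F C) else 0)
      = (if u \ C = ∅ then 1 else 0) * F C := by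
    intro C hC
    have hCu : C ⊆ u := Finset.mem_powerset.mp hC
    rw [← Finset.sum_filter]
    have hbij : ∑ A ∈ u.powerset.filter (fun A => C ⊆ A),
        (-1 : ℂ) ^ A.card * ((-1 : ℂ) ^ C.card * F C)
        = ∑ B ∈ (u \ C).powerset, (-1 : ℂ) ^ (B.card + C.card) * ((-1 : ℂ) ^ C.card * F C) := by
      refine Finset.sum_bij' (fun A _ => A \ C) (fun B _ => B ∪ C) ?_ ?_ ?_ ?_ ?_
      · intro A hA
        rw [Finset.mem_filter, Finset.mem_powerset] at hA
        exact Finset.mem_powerset.mpr (Finset.sdiff_subset_sdiff hA.1 (le_refl _))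
      · intro B hB
        rw [Finset.mem_powerset] at hB
        rw [Finset.mem_filter, Finset.mem_powerset]
        refine ⟨Finset.union_subset (hB.trans (Finset.sdiff_subset)) hCu, Finset.subset_union_right⟩
      · intro A hA
        rw [Finset.mem_filter] at hA
        exact Finset.sdiff_union_of_subset hA.2
      · intro B hB
        rw [Finset.mem_powerset] at hB
        apply Finset.union_sdiff_cancel_right
        exact Finset.disjoint_of_subset_left hB Finset.sdiff_disjoint
      · intro A hA
        rw [Finset.mem_filter] at hA
        congr 2
        rw [Finset.card_sdiff_add_card_eq_card hA.2]
    rw [hbij]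
    have : ∀ B ∈ (u \ C).powerset, (-1 : ℂ) ^ (B.card + C.card) * ((-1 : ℂ) ^ C.card * F C)
        = (-1 : ℂ) ^ B.card * (((-1 : ℂ) ^ C.card * (-1 : ℂ) ^ C.card) * F C) := by
      intro B _
      rw [pow_add]; ring
    rw [Finset.sum_congr rfl this, ← Finset.sum_mul, neg_one_sum_C]
    have hone : (-1 : ℂ) ^ C.card * (-1 : ℂ) ^ C.card = 1 := by
      rw [← pow_add]
      exact Even.neg_one_pow ⟨C.card, rfl⟩
    rw [hone, one_mul]
  rw [Finset.sum_congr rfl step2]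
  have step3 : ∀ C ∈ u.powerset, (if u \ C = ∅ then 1 else 0) * F C
      = if C = u then F C else 0 := by
    intro C hC
    have hCu : C ⊆ u := Finset.mem_powerset.mp hC
    by_cases h : C = u
    · subst h; simp
    · rw [if_neg h, if_neg, zero_mul]
      intro hdiff
      exact h (Finset.Subset.antisymm hCu (Finset.sdiff_eq_empty_iff_subset.mp hdiff))
  rw [Finset.sum_congr rfl step3, Finset.sum_ite_eq' u.powerset u (fun C => F C),
    if_pos (Finset.mem_powerset_self u)]

lemma VS_zero {A : Finset (Fin n)} {j : Fin n} (hj : j ∈ A) (G : Finset (Fin n) → ℂ)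
    (hpair : ∀ C ⊆ A.erase j, G C = G (insert j C)) :
    ∑ C ∈ A.powerset, (-1 : ℂ) ^ C.card * G C = 0 := by
  rw [show A.powerset = (insert j (A.erase j)).powerset by rw [Finset.insert_erase hj],
    Finset.sum_powerset_insert (Finset.notMem_erase j A)]
  have hnegs : ∀ C ∈ (A.erase j).powerset,
      (-1 : ℂ) ^ (insert j C).card * G (insert j C) = -((-1 : ℂ) ^ C.card * G C) := by
    intro C hC
    have hCsub : C ⊆ A.erase j := Finset.mem_powerset.mp hC
    have hjC : j ∉ C := fun h => Finset.notMem_erase j A (hCsub h)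
    rw [← hpair C hCsub, Finset.card_insert_of_notMem hjC, pow_succ]
    ring
  rw [Finset.sum_congr rfl hnegs, Finset.sum_neg_distrib, add_neg_cancel]

lemma foldr_congr_b {b1 b2 : Fin n → ℝ} (F : (Fin n → ℝ) → ℂ) :
    ∀ L : List (Fin n), (∀ j ∈ L, b1 j = b2 j) →
      L.foldr (fun j G => pderivI 0 (b1 j) j G) F = L.foldr (fun j G => pderivI 0 (b2 j) j G) F := by
  intro L
  induction L with
  | nil => intro _; rfl
  | cons j L ih =>
      intro hL
      show pderivI 0 (b1 j) j _ = pderivI 0 (b2 j) j _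
      rw [ih fun k hk => hL k (List.mem_cons_of_mem _ hk), hL j (List.mem_cons_self)]

lemma mixedDeriv_congr_b {b1 b2 : Fin n → ℝ} {T : Finset (Fin n)}
    (hb : ∀ j ∈ T, b1 j = b2 j) (F : (Fin n → ℝ) → ℂ) :
    mixedDeriv (fun _ => (0 : ℝ)) b1 T F = mixedDeriv (fun _ => (0 : ℝ)) b2 T F :=
  foldr_congr_b F (T.sort (· ≤ ·)) fun j hj => hb j ((Finset.mem_sort _).mp hj)

lemma foldr_indep {b : Fin n → ℝ} {A : Finset (Fin n)} {F : (Fin n → ℝ) → ℂ}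
    (hF : ∀ x y : Fin n → ℝ, (∀ k ∈ A, x k = y k) → F x = F y) :
    ∀ L : List (Fin n), (∀ j ∈ L, j ∈ A) →
    ∀ x y : Fin n → ℝ, (∀ k ∈ A, x k = y k) →
      L.foldr (fun j G => pderivI 0 (b j) j G) F x = L.foldr (fun j G => pderivI 0 (b j) j G) F y := by
  intro L
  induction L with
  | nil => intro _ x y hxy; exact hF x y hxy
  | cons j L ih =>
      intro hL x y hxy
      have hjA : j ∈ A := hL j (List.mem_cons_self)
      have ihL := ih fun k hk => hL k (List.mem_cons_of_mem _ hk)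
      show derivWithin _ _ (x j) = derivWithin _ _ (y j)
      have hxyj : x j = y j := hxy j hjA
      have hfun : (fun t => L.foldr (fun j G => pderivI 0 (b j) j G) F (Function.update x j t))
          = (fun t => L.foldr (fun j G => pderivI 0 (b j) j G) F (Function.update y j t)) := by
        funext t
        apply ihL
        intro k hk
        rcases eq_or_ne k j with rfl | hkj
        · rw [Function.update_self, Function.update_self]
        · rw [Function.update_of_ne hkj, Function.update_of_ne hkj]
          exact hxy k hk
      rw [hfun, hxyj]

lemma mixedDeriv_indep {b : Fin n → ℝ} {A T : Finset (Fin n)} (hT : T ⊆ A)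
    {F : (Fin n → ℝ) → ℂ} (hF : ∀ x y : Fin n → ℝ, (∀ k ∈ A, x k = y k) → F x = F y)
    {x y : Fin n → ℝ} (hxy : ∀ k ∈ A, x k = y k) :
    mixedDeriv (fun _ => (0 : ℝ)) b T F x = mixedDeriv (fun _ => (0 : ℝ)) b T F y :=
  foldr_indep hF (T.sort (· ≤ ·)) (fun j hj => hT ((Finset.mem_sort _).mp hj)) x y hxy

lemma piFinset_filter {β : Fin n → ℕ} {A : Finset (Fin n)} {X : Fin n → ℝ}
    (hX0 : ∀ j ∈ A, 0 ≤ X j) (hXb : ∀ j ∈ A, X j ≤ (β j : ℝ)) (hXc : ∀ j ∉ A, X j = (β j : ℝ))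
    [DecidablePred fun m : Fin n → ℕ => ∀ j ∈ A, ((m j : ℝ) ≤ X j)] :
    Fintype.piFinset (fun j => Finset.range ((⌊X j⌋ + 1).toNat))
      = (Fintype.piFinset (fun j => Finset.range (β j + 1))).filter
          (fun m => ∀ j ∈ A, ((m j : ℝ) ≤ X j)) := by
  ext m
  simp only [Fintype.mem_piFinset, Finset.mem_range, Finset.mem_filter]
  constructor
  · intro H
    have key : ∀ j ∈ A, (m j : ℝ) ≤ X j := by
      intro j hj
      have h1 : ((m j : ℤ) : ℤ) < ⌊X j⌋ + 1 := Int.lt_toNat.mp (H j)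
      exact Int.le_floor.mp (Int.lt_add_one_iff.mp h1)
    refine ⟨fun j => ?_, key⟩
    by_cases hj : j ∈ A
    · have : (m j : ℝ) ≤ (β j : ℝ) := (key j hj).trans (hXb j hj)
      exact Nat.lt_succ_iff.mpr (by exact_mod_cast this)
    · have h1 : ((m j : ℤ) : ℤ) < ⌊X j⌋ + 1 := Int.lt_toNat.mp (H j)
      rw [hXc j hj, Int.floor_natCast] at h1
      exact_mod_cast h1
  · rintro ⟨H1, H2⟩ j
    by_cases hj : j ∈ A
    · rw [Int.lt_toNat]
      exact Int.lt_add_one_iff.mpr (Int.le_floor.mpr (H2 j hj))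
    · rw [Int.lt_toNat, hXc j hj, Int.floor_natCast]
      exact_mod_cast H1 j

/-- The heart of the good case. -/
theorem claim_good {β : Fin n → ℕ} {A : Finset (Fin n)} (hgood : ∀ j ∈ A, 1 ≤ β j)
    {g : (Fin n → ℝ) → ℂ}
    (hg : ContDiffOn ℝ (⊤ : ℕ∞) g ((Set.univ.pi fun j => Set.Icc (0 : ℝ) (β j)) \ {0}))
    (a : (Fin n → ℕ) → ℂ) (ha : a 0 = 0) :
    (∫ x : {j // j ∈ A} → ℝ in
        Set.univ.pi (fun j : {j // j ∈ A} => Set.Icc (0 : ℝ) ((β j.1 : ℝ))),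
      mixedDeriv (fun _ => (0 : ℝ)) (fun j => (β j : ℝ)) A
          (fun y => g (embedI (fun _ => (0 : ℝ)) (fun j => (β j : ℝ)) A
            ((Finset.univ : Finset (Fin n)) \ A) y))
          (extendA A x) *
        partialSum a
          (embedI (fun _ => (0 : ℝ)) (fun j => (β j : ℝ)) A
            ((Finset.univ : Finset (Fin n)) \ A) (extendA A x)))
      = ∑ m ∈ Fintype.piFinset (fun j => Finset.range (β j + 1)),
          a m * (∑ C ∈ A.powerset, (-1 : ℂ) ^ C.card *
            g (fun k => if k ∈ C then (m k : ℝ) else (β k : ℝ))) := by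
  classical
  -- the modified upper bound
  obtain ⟨b', hb'A, hb'pos, hb'ge⟩ : ∃ b' : Fin n → ℝ, (∀ k ∈ A, b' k = (β k : ℝ))
      ∧ (∀ k, 0 < b' k) ∧ (∀ k, (β k : ℝ) ≤ b' k) := by
    refine ⟨fun k => if k ∈ A then (β k : ℝ) else (β k : ℝ) + 1,
      fun k hk => if_pos hk, fun k => ?_, fun k => ?_⟩
    · show (0:ℝ) < if k ∈ A then (β k : ℝ) else (β k : ℝ) + 1
      by_cases hk : k ∈ A
      · simp only [if_pos hk]; exact_mod_cast hgood k hk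
      · simp only [if_neg hk]; positivity
    · show (β k : ℝ) ≤ if k ∈ A then (β k : ℝ) else (β k : ℝ) + 1
      by_cases hk : k ∈ A
      · simp [hk]
      · simp only [if_neg hk]; linarith
  -- the function F
  set F : (Fin n → ℝ) → ℂ := fun y => g (fun k => if k ∈ A then y k else (β k : ℝ)) with hFdef
  have hfeq : (fun y => g (embedI (fun _ => (0 : ℝ)) (fun j => (β j : ℝ)) A
      ((Finset.univ : Finset (Fin n)) \ A) y)) = F := by
    funext y
    rw [hFdef]
    congr 1
    funext k
    by_cases hk : k ∈ A
    · simp [embedI, hk]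
    · simp [embedI, hk, Finset.mem_sdiff]
  -- the singular set
  obtain ⟨s, hsc, hs_upd, hsmooth, hs_m⟩ : ∃ s : Set (Fin n → ℝ), IsClosed s
      ∧ (∀ j ∈ A, ∀ (x : Fin n → ℝ) (t : ℝ), t ≠ 0 → Function.update x j t ∉ s)
      ∧ ContDiffOn ℝ (⊤ : ℕ∞) F (bigBox b' \ s)
      ∧ (∀ m : Fin n → ℕ, (∀ k, m k ≤ β k) → m ≠ 0 →
          ∀ y : Fin n → ℝ, (∀ k, 0 ≤ y k) → (∀ k ∈ A, (m k : ℝ) ≤ y k) → y ∉ s) := by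
    have hembD : ∀ y : Fin n → ℝ, y ∈ bigBox b' →
        (fun k => if k ∈ A then y k else (β k : ℝ)) ∈
          (Set.univ.pi fun j => Set.Icc (0 : ℝ) (β j)) := by
      intro y hy k _
      show (if k ∈ A then y k else (β k : ℝ)) ∈ Set.Icc (0:ℝ) ((β k : ℝ))
      by_cases hk : k ∈ A
      · simp only [if_pos hk]
        have h2 : y k ∈ Set.Icc 0 (b' k) := hy k trivial
        rw [hb'A k hk] at h2
        exact h2
      · simp only [if_neg hk]
        exact ⟨Nat.cast_nonneg _, le_refl _⟩
    have hembC : ContDiff ℝ (⊤ : ℕ∞) (fun (y : Fin n → ℝ) => (fun k => if k ∈ A then y k else (β k : ℝ))) := by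
      apply contDiff_pi.mpr
      intro k
      by_cases hk : k ∈ A
      · simp only [if_pos hk]
        exact (ContinuousLinearMap.proj k : (Fin n → ℝ) →L[ℝ] ℝ).contDiff
      · simp only [if_neg hk]
        exact contDiff_const
    by_cases hdeg : ∀ k, k ∉ A → β k = 0
    · refine ⟨{y | ∀ k ∈ A, y k = 0}, ?_, ?_, ?_, ?_⟩
      · have hset : {y : Fin n → ℝ | ∀ k ∈ A, y k = 0}
            = ⋂ k ∈ A, {y : Fin n → ℝ | y k = 0} := by
          ext y; simp
        rw [hset]
        exact isClosed_biInter fun k _ => isClosed_eq (continuous_apply k) continuous_const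
      · intro j hj x t ht hmem
        exact ht (by simpa using hmem j hj)
      · rw [hFdef]
        apply hg.comp hembC.contDiffOn
        intro y hy
        refine ⟨hembD y hy.1, ?_⟩
        intro h0
        apply hy.2
        intro k hk
        have := congrFun (Set.mem_singleton_iff.mp h0) k
        simpa [hk] using this
      · intro m hmle hm0 y hy0 hmy hymem
        obtain ⟨j0, hj0⟩ := Function.ne_iff.mp hm0
        have hj0A : j0 ∈ A := by
          by_contra hj0A
          exact hj0 (Nat.le_zero.mp ((hdeg j0 hj0A) ▸ hmle j0))
        have h1 : (1 : ℝ) ≤ (m j0 : ℝ) := by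
          exact_mod_cast Nat.one_le_iff_ne_zero.mpr hj0
        have h2 := hmy j0 hj0A
        rw [hymem j0 hj0A] at h2
        linarith
    · push_neg at hdeg
      obtain ⟨k0, hk0A, hk0⟩ := hdeg
      refine ⟨∅, isClosed_empty, by simp, ?_, by simp⟩
      rw [hFdef]
      apply hg.comp hembC.contDiffOn
      intro y hy
      refine ⟨hembD y hy.1, ?_⟩
      intro h0
      have h2 := congrFun (Set.mem_singleton_iff.mp h0) k0
      have h3 : (β k0 : ℝ) = 0 := by simpa [hk0A] using h2
      exact hk0 (by exact_mod_cast h3)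
  -- independence of F from the coordinates outside A
  have hFind : ∀ x y : Fin n → ℝ, (∀ k ∈ A, x k = y k) → F x = F y := by
    intro x y hxy
    show g _ = g _
    congr 1
    funext k
    by_cases hk : k ∈ A
    · simp only [if_pos hk]; exact hxy k hk
    · simp only [if_neg hk]
  -- pointwise identification of the mixed derivative
  have hmix_pt : ∀ x : {j // j ∈ A} → ℝ,
      mixedDeriv (fun _ => (0 : ℝ)) (fun j => (β j : ℝ)) A F (extendA A x)
        = mixedDeriv (fun _ => (0 : ℝ)) b' A F (patchF A (fun k => (β k : ℝ)) x) := by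
    intro x
    rw [mixedDeriv_congr_b (b2 := b') (fun k hk => (hb'A k hk).symm) F]
    exact mixedDeriv_indep (subset_refl A) hFind
      (fun k hk => by simp [extendA, patchF, dif_pos hk])
  have hXeq : ∀ x : {j // j ∈ A} → ℝ,
      embedI (fun _ => (0 : ℝ)) (fun j => (β j : ℝ)) A
        ((Finset.univ : Finset (Fin n)) \ A) (extendA A x)
      = patchF A (fun k => (β k : ℝ)) x := by
    intro x
    funext k
    by_cases hk : k ∈ A
    · simp [embedI, extendA, patchF, hk]
    · simp [embedI, extendA, patchF, hk, Finset.mem_sdiff]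
  -- notation
  set box : Set ({j // j ∈ A} → ℝ) :=
    Set.univ.pi (fun j : {j // j ∈ A} => Set.Icc (0 : ℝ) ((β j.1 : ℝ))) with hboxdef
  have hboxmeas : MeasurableSet box := MeasurableSet.univ_pi fun i => measurableSet_Icc
  set big := Fintype.piFinset (fun j => Finset.range (β j + 1)) with hbigdef
  have hmle : ∀ m ∈ big, ∀ k, m k ≤ β k := by
    intro m hm k
    have := (Fintype.mem_piFinset.mp hm) k
    rw [Finset.mem_range] at this
    omega
  -- the sets P m
  set P : (Fin n → ℕ) → Set ({j // j ∈ A} → ℝ) :=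
    fun m => Set.univ.pi (fun i : {j // j ∈ A} => Set.Ici ((m i.1 : ℝ))) with hPdef
  have hPmeas : ∀ m, MeasurableSet (P m) := fun m => MeasurableSet.univ_pi fun i => measurableSet_Ici
  have hPclosed : ∀ m, IsClosed (P m) := fun m => isClosed_set_pi fun i _ => isClosed_Ici
  have hcondP : ∀ (m : Fin n → ℕ) (x : {j // j ∈ A} → ℝ),
      (∀ j ∈ A, ((m j : ℝ) ≤ patchF A (fun k => (β k : ℝ)) x j)) ↔ x ∈ P m := by
    intro m x
    constructor
    · intro H i _
      have := H i.1 i.2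
      simp only [patchF, dif_pos i.2] at this
      exact this
    · intro H j hj
      have := H ⟨j, hj⟩ trivial
      simp only [patchF, dif_pos hj]
      exact this
  -- partial sum rewriting on box
  have hpS : ∀ x ∈ box, partialSum a
      (embedI (fun _ => (0 : ℝ)) (fun j => (β j : ℝ)) A
        ((Finset.univ : Finset (Fin n)) \ A) (extendA A x))
      = ∑ m ∈ big, if (∀ j ∈ A, ((m j : ℝ) ≤ patchF A (fun k => (β k : ℝ)) x j))
          then a m else 0 := by
    intro x hx
    rw [hXeq x]
    unfold partialSum
    rw [piFinset_filter (X := patchF A (fun k => (β k : ℝ)) x) (β := β) (A := A)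
      ?h0 ?hb ?hc, Finset.sum_filter]
    case h0 =>
      intro j hj
      simp only [patchF, dif_pos hj]
      exact (hx ⟨j, hj⟩ trivial).1
    case hb =>
      intro j hj
      simp only [patchF, dif_pos hj]
      exact (hx ⟨j, hj⟩ trivial).2
    case hc =>
      intro j hj
      simp only [patchF, dif_neg hj]
  -- the b'-form mixed derivative
  have hmixsmooth : ContDiffOn ℝ (⊤ : ℕ∞) (mixedDeriv (fun _ => (0 : ℝ)) b' A F) (bigBox b' \ s) :=
    contDiffOn_mixedDeriv hb'pos hsc hs_upd hsmooth (subset_refl A)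
  -- maps-to for patch on box ∩ P m
  have hmapsP : ∀ m : Fin n → ℕ, (∀ k, m k ≤ β k) → m ≠ 0 →
      ∀ x : {j // j ∈ A} → ℝ, x ∈ box → x ∈ P m →
      patchF A (fun k => (β k : ℝ)) x ∈ bigBox b' \ s := by
    intro m hml hm0 x hxbox hxP
    constructor
    · intro k _
      by_cases hk : k ∈ A
      · simp only [patchF, dif_pos hk]
        have := hxbox ⟨k, hk⟩ trivial
        exact ⟨this.1, this.2.trans (by rw [hb'A k hk])⟩
      · simp only [patchF, dif_neg hk]
        exact ⟨Nat.cast_nonneg _, hb'ge k⟩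
    · apply hs_m m hml hm0
      · intro k
        by_cases hk : k ∈ A
        · simp only [patchF, dif_pos hk]; exact (hxbox ⟨k, hk⟩ trivial).1
        · simp only [patchF, dif_neg hk]; exact Nat.cast_nonneg _
      · intro k hk
        simp only [patchF, dif_pos hk]
        exact hxP ⟨k, hk⟩ trivial
  -- integrability of each summand
  have hInts : ∀ m ∈ big, Integrable
      (fun x : {j // j ∈ A} → ℝ =>
        if (∀ j ∈ A, ((m j : ℝ) ≤ patchF A (fun k => (β k : ℝ)) x j))
        then mixedDeriv (fun _ => (0 : ℝ)) b' A F (patchF A (fun k => (β k : ℝ)) x) * a m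
        else 0)
      (volume.restrict box) := by
    intro m hm
    by_cases hm0 : m = 0
    · subst hm0
      simp only [ha, mul_zero, ite_self]
      exact integrable_zero _ _ _
    · have heq : (fun x : {j // j ∈ A} → ℝ =>
          if (∀ j ∈ A, ((m j : ℝ) ≤ patchF A (fun k => (β k : ℝ)) x j))
          then mixedDeriv (fun _ => (0 : ℝ)) b' A F (patchF A (fun k => (β k : ℝ)) x) * a m
          else 0)
          = (P m).indicator (fun x =>
              mixedDeriv (fun _ => (0 : ℝ)) b' A F (patchF A (fun k => (β k : ℝ)) x) * a m) := by
        funext x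
        rw [Set.indicator_apply]
        exact if_congr (hcondP m x) rfl rfl
      rw [heq]
      rw [integrable_indicator_iff (hPmeas m)]
      rw [IntegrableOn, Measure.restrict_restrict (hPmeas m)]
      refine ContinuousOn.integrableOn_compact
        ((isCompact_univ_pi fun i => isCompact_Icc).inter_left (hPclosed m))
        (ContinuousOn.mul ?_ continuousOn_const)
      refine ContinuousOn.comp hmixsmooth.continuousOn
        (continuous_patchF A (fun k => (β k : ℝ))).continuousOn ?_
      intro x hx
      exact hmapsP m (hmle m hm) hm0 x hx.2 hx.1
  -- evaluation of each summand
  have hEval : ∀ m ∈ big,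
      (∫ x : {j // j ∈ A} → ℝ in box,
        if (∀ j ∈ A, ((m j : ℝ) ≤ patchF A (fun k => (β k : ℝ)) x j))
        then mixedDeriv (fun _ => (0 : ℝ)) b' A F (patchF A (fun k => (β k : ℝ)) x) * a m
        else 0)
      = a m * (∑ C ∈ A.powerset, (-1 : ℂ) ^ C.card *
          g (fun k => if k ∈ C then (m k : ℝ) else (β k : ℝ))) := by
    intro m hm
    by_cases hm0 : m = 0
    · subst hm0
      simp only [ha, mul_zero, ite_self, integral_zero, zero_mul]
    · have heq : (fun x : {j // j ∈ A} → ℝ =>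
          if (∀ j ∈ A, ((m j : ℝ) ≤ patchF A (fun k => (β k : ℝ)) x j))
          then mixedDeriv (fun _ => (0 : ℝ)) b' A F (patchF A (fun k => (β k : ℝ)) x) * a m
          else 0)
          = (P m).indicator (fun x =>
              mixedDeriv (fun _ => (0 : ℝ)) b' A F (patchF A (fun k => (β k : ℝ)) x) * a m) := by
        funext x
        rw [Set.indicator_apply]
        exact if_congr (hcondP m x) rfl rfl
      rw [heq, setIntegral_indicator (hPmeas m)]
      have hbp : box ∩ P m
          = Set.univ.pi (fun i : {j // j ∈ A} => Set.Icc ((m i.1 : ℝ)) ((β i.1 : ℝ))) := by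
        ext x
        simp only [Set.mem_inter_iff, hboxdef, hPdef, Set.mem_pi, Set.mem_univ, forall_true_left,
          Set.mem_Icc, Set.mem_Ici]
        constructor
        · rintro ⟨h1, h2⟩ i
          exact ⟨h2 i, (h1 i).2⟩
        · intro H
          exact ⟨fun i => ⟨le_trans (Nat.cast_nonneg _) (H i).1, (H i).2⟩, fun i => (H i).1⟩
      rw [hbp, integral_mul_const]
      -- apply the main induction
      have hML := ML (b := b') (c := fun k => if k ∈ A then (m k : ℝ) else (β k : ℝ))
        (A := A) (s := s) hb'pos
        (fun k => by by_cases hk : k ∈ A <;> simp [hk])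
        (fun k => by
          show (if k ∈ A then ((m k : ℝ)) else ((β k : ℝ))) ≤ b' k
          by_cases hk : k ∈ A
          · simp only [if_pos hk, hb'A k hk]
            exact_mod_cast hmle m hm k
          · simp only [if_neg hk]; exact hb'ge k)
        hsc hs_upd
        (fun y hy => hs_m m (hmle m hm) hm0 y
          (fun k => le_trans (by by_cases hk : k ∈ A <;> simp [hk]) (hy k).1)
          (fun k hk => by
            have h2 : (if k ∈ A then ((m k : ℝ)) else ((β k : ℝ))) ≤ y k := (hy k).1
            rwa [if_pos hk] at h2))
        hsmooth A (subset_refl A) (fun k => (β k : ℝ))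
        (fun k => by
          show (β k : ℝ) ∈ Set.Icc (if k ∈ A then ((m k : ℝ)) else ((β k : ℝ))) (b' k)
          by_cases hk : k ∈ A
          · simp only [if_pos hk]
            exact Set.mem_Icc.mpr ⟨by exact_mod_cast hmle m hm k, hb'ge k⟩
          · simp only [if_neg hk]
            exact Set.mem_Icc.mpr ⟨le_refl _, hb'ge k⟩)
      have hreg : (Set.univ.pi fun i : {i // i ∈ A} =>
          Set.Icc ((fun k => if k ∈ A then (m k : ℝ) else (β k : ℝ)) i.1) (b' i.1))
          = Set.univ.pi (fun i : {j // j ∈ A} => Set.Icc ((m i.1 : ℝ)) ((β i.1 : ℝ))) := by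
        apply congrArg (Set.pi Set.univ)
        funext i
        show Set.Icc (if (i : Fin n) ∈ A then ((m i.1 : ℝ)) else ((β i.1 : ℝ))) (b' i.1) = _
        rw [if_pos i.2, hb'A i.1 i.2]
      rw [hreg] at hML
      rw [hML]
      have hvtx : ∀ C ∈ A.powerset,
          (-1 : ℂ) ^ C.card * F (fun k => if k ∈ C then (if k ∈ A then (m k : ℝ) else (β k : ℝ))
            else if k ∈ A then b' k else (β k : ℝ))
          = (-1 : ℂ) ^ C.card * g (fun k => if k ∈ C then (m k : ℝ) else (β k : ℝ)) := by
        intro C hC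
        have hCA : C ⊆ A := Finset.mem_powerset.mp hC
        congr 1
        show g _ = g _
        congr 1
        funext k
        by_cases hk : k ∈ A
        · by_cases hkC : k ∈ C
          · simp only [if_pos hk, if_pos hkC]
          · simp only [if_pos hk, if_neg hkC, hb'A k hk]
        · simp only [if_neg hk, if_neg (fun h => hk (hCA h))]
      rw [Finset.sum_congr rfl hvtx]
      ring
  -- put everything together
  calc (∫ x : {j // j ∈ A} → ℝ in box,
      mixedDeriv (fun _ => (0 : ℝ)) (fun j => (β j : ℝ)) A
          (fun y => g (embedI (fun _ => (0 : ℝ)) (fun j => (β j : ℝ)) A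
            ((Finset.univ : Finset (Fin n)) \ A) y)) (extendA A x) *
        partialSum a (embedI (fun _ => (0 : ℝ)) (fun j => (β j : ℝ)) A
            ((Finset.univ : Finset (Fin n)) \ A) (extendA A x)))
      = ∫ x : {j // j ∈ A} → ℝ in box, ∑ m ∈ big,
          (if (∀ j ∈ A, ((m j : ℝ) ≤ patchF A (fun k => (β k : ℝ)) x j))
          then mixedDeriv (fun _ => (0 : ℝ)) b' A F (patchF A (fun k => (β k : ℝ)) x) * a m
          else 0) := by
        apply setIntegral_congr_fun hboxmeas
        intro x hx
        dsimp only
        rw [hfeq, hmix_pt x, hpS x hx, Finset.mul_sum]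
        refine Finset.sum_congr rfl fun m _ => ?_
        rw [mul_ite, mul_zero]
    _ = ∑ m ∈ big, ∫ x : {j // j ∈ A} → ℝ in box,
          (if (∀ j ∈ A, ((m j : ℝ) ≤ patchF A (fun k => (β k : ℝ)) x j))
          then mixedDeriv (fun _ => (0 : ℝ)) b' A F (patchF A (fun k => (β k : ℝ)) x) * a m
          else 0) := integral_finset_sum big hInts
    _ = ∑ m ∈ big, a m * (∑ C ∈ A.powerset, (-1 : ℂ) ^ C.card *
          g (fun k => if k ∈ C then (m k : ℝ) else (β k : ℝ))) :=
        Finset.sum_congr rfl hEval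

end AbelAux

open AbelAux in
/-- Corollary 2.10: if `a(0,…,0) = 0` and `g` is smooth on `∏_{j} [0, β_j] ∖ {0}`
(`g(0)` being arbitrary), then
`∑_{m₁=0}^{β₁} ⋯ ∑_{m_n=0}^{β_n} g(m) a(m)
  = ∑_{A ⊆ N} (−1)^{|A|} ∫_{∏_{j∈A} [0, β_j]} g_{A,N∖A}(x) S_{A,N∖A}(x) dx`,
where `g_{A,N∖A} = ∂^{|A|}(g ∘ I_{A,N∖A})` and `S_{A,N∖A} = S ∘ I_{A,N∖A}`; for `A = ∅`
the integral is the single value `g_{∅,N} S_{∅,N}` (the empty product measure has mass one). -/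
theorem statement_3 (n : ℕ) (hn : 1 ≤ n) (β : Fin n → ℕ)
    (g : (Fin n → ℝ) → ℂ)
    (hg : ContDiffOn ℝ (⊤ : ℕ∞) g
      ((Set.univ.pi fun j => Set.Icc (0 : ℝ) (β j)) \ {0}))
    (a : (Fin n → ℕ) → ℂ) (ha : a 0 = 0) :
    ∑ m ∈ Fintype.piFinset (fun j => Finset.range (β j + 1)),
        g (fun j => (m j : ℝ)) * a m
      = ∑ A ∈ (Finset.univ : Finset (Fin n)).powerset,
          (-1 : ℂ) ^ A.card *
            ∫ x : {j // j ∈ A} → ℝ in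
                Set.univ.pi (fun j : {j // j ∈ A} => Set.Icc (0 : ℝ) ((β j.1 : ℝ))),
              mixedDeriv (fun _ => (0 : ℝ)) (fun j => (β j : ℝ)) A
                  (fun y => g (embedI (fun _ => (0 : ℝ)) (fun j => (β j : ℝ)) A
                    ((Finset.univ : Finset (Fin n)) \ A) y))
                  (extendA A x) *
                partialSum a
                  (embedI (fun _ => (0 : ℝ)) (fun j => (β j : ℝ)) A
                    ((Finset.univ : Finset (Fin n)) \ A) (extendA A x)) := by
  classical
  have hmle : ∀ m ∈ Fintype.piFinset (fun j => Finset.range (β j + 1)), ∀ k, m k ≤ β k := by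
    intro m hm k
    have := (Fintype.mem_piFinset.mp hm) k
    rw [Finset.mem_range] at this
    omega
  have claim1 : ∀ A ∈ (Finset.univ : Finset (Fin n)).powerset,
      ((-1 : ℂ) ^ A.card *
        ∫ x : {j // j ∈ A} → ℝ in
            Set.univ.pi (fun j : {j // j ∈ A} => Set.Icc (0 : ℝ) ((β j.1 : ℝ))),
          mixedDeriv (fun _ => (0 : ℝ)) (fun j => (β j : ℝ)) A
              (fun y => g (embedI (fun _ => (0 : ℝ)) (fun j => (β j : ℝ)) A
                ((Finset.univ : Finset (Fin n)) \ A) y))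
              (extendA A x) *
            partialSum a
              (embedI (fun _ => (0 : ℝ)) (fun j => (β j : ℝ)) A
                ((Finset.univ : Finset (Fin n)) \ A) (extendA A x)))
      = ∑ m ∈ Fintype.piFinset (fun j => Finset.range (β j + 1)),
          a m * ((-1 : ℂ) ^ A.card * ∑ C ∈ A.powerset, (-1 : ℂ) ^ C.card *
            g (fun k => if k ∈ C then (m k : ℝ) else (β k : ℝ))) := by
    intro A _
    by_cases hgood : ∀ j ∈ A, 1 ≤ β j
    · rw [claim_good hgood hg a ha, Finset.mul_sum]
      refine Finset.sum_congr rfl fun m _ => ?_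
      ring
    · push_neg at hgood
      obtain ⟨j, hjA, hjlt⟩ := hgood
      have hj0 : β j = 0 := Nat.lt_one_iff.mp hjlt
      have hvol : volume (Set.univ.pi
          (fun i : {j // j ∈ A} => Set.Icc (0 : ℝ) ((β i.1 : ℝ)))) = 0 := by
        rw [volume_pi, MeasureTheory.Measure.pi_pi]
        refine Finset.prod_eq_zero (Finset.mem_univ (⟨j, hjA⟩ : {j // j ∈ A})) ?_
        rw [Real.volume_Icc]
        simp [hj0]
      rw [show (volume.restrict (Set.univ.pi
          (fun i : {j // j ∈ A} => Set.Icc (0 : ℝ) ((β i.1 : ℝ))))) = 0 from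
        MeasureTheory.Measure.restrict_eq_zero.mpr hvol]
      rw [integral_zero_measure, mul_zero]
      symm
      refine Finset.sum_eq_zero fun m hm => ?_
      have hVSz : (∑ C ∈ A.powerset, (-1 : ℂ) ^ C.card *
          g (fun k => if k ∈ C then (m k : ℝ) else (β k : ℝ))) = 0 := by
        apply VS_zero hjA
        intro C hC
        congr 1
        funext k
        rcases eq_or_ne k j with rfl | hkj
        · have hkC : k ∉ C := fun h => Finset.notMem_erase k A (hC h)
          rw [if_neg hkC, if_pos (Finset.mem_insert_self k C)]
          have hmk : m k = 0 := by
            have := hmle m hm k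
            omega
          rw [hj0, hmk]
        · by_cases hkC : k ∈ C
          · rw [if_pos hkC, if_pos (Finset.mem_insert_of_mem hkC)]
          · rw [if_neg hkC, if_neg (fun h => hkC ((Finset.mem_insert.mp h).resolve_left hkj))]
      rw [hVSz, mul_zero, mul_zero]
  rw [Finset.sum_congr rfl claim1, Finset.sum_comm]
  refine Finset.sum_congr rfl fun m hm => ?_
  rw [← Finset.mul_sum]
  rw [incl_excl (Finset.univ : Finset (Fin n))
    (fun C => g (fun k => if k ∈ C then (m k : ℝ) else (β k : ℝ)))]
  rw [show (fun k => if k ∈ (Finset.univ : Finset (Fin n)) then (m k : ℝ) else (β k : ℝ))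
      = fun k => (m k : ℝ) by funext k; simp]
  ring


end
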